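/- Let M ≥ 1, N ≥ 1, uniform-in-index cell widths Δx_j > 0 and Δy_k > 0 for j,k ∈ {−N,…,N}, integer valences z_1,…,z_M, and symmetric discrete kernels K, W : ℤ×ℤ → ℝ with K_{n,l} = K_{−n,−l} and W_{n,l} = W_{−n,−l}. Suppose c_{m,j,k} : ℝ → (0,∞) is differentiable for each m ∈ {1,…,M} and j,k ∈ {−N,…,N}. Define ρ_{j,k}(t) := Σ_m z_m c_{m,j,k}(t), θ_{j,k}(t) := Σ_m c_{m,j,k}(t), ψ_{m,j,k}(t) := 1 + log c_{m,j,k}(t) + Σ_{i,l=−N}^{N} Δx_i Δy_l ( z_m K_{j−i,k−l} ρ_{i,l}(t) + W_{j−i,k−l} θ_{i,l}(t) ), velocities u_{m,j+1/2,k} := −(ψ_{m,j+1,k} − ψ_{m,j,k})/Δx_j for j ≤ N−1 and v_{m,j,k+1/2} := −(ψ_{m,j,k+1} − ψ_{m,j,k})/Δy_k for k ≤ N−1, upwind fluxes F^x_{m,j+1/2,k} := u⁺_{m,j+1/2,k} c_{m,j,k} − u⁻_{m,j+1/2,k} c_{m,j+1,k} and F^y_{m,j,k+1/2} := v⁺_{m,j,k+1/2}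 c_{m,j,k} − v⁻_{m,j,k+1/2} c_{m,j,k+1}, with no-flux boundary convention F^x_{m,±(N+1/2),k} = 0 and F^y_{m,j,±(N+1/2)} = 0. Assume d/dt c_{m,j,k} = −(F^x_{m,j+1/2,k} − F^x_{m,j−1/2,k})/Δx_j − (F^y_{m,j,k+1/2} − F^y_{m,j,k−1/2})/Δy_k for all m,j,k,t. Define E_Δ(t) := Σ_m Σ_{j,k} Δx_j Δy_k c_{m,j,k} log c_{m,j,k} + (1/2) Σ_{i,j,k,l} Δx_j Δx_i Δy_k Δy_l ( K_{j−i,k−l} ρ_{i,l} ρ_{j,k} + W_{j−i,k−l} θ_{i,l} θ_{j,k} ) and D_Δ(t) := Σ_m Σ_{j,k=−N}^{N−1} Δx_j Δy_k [ (u_{m,j+1/2,k})² + (v_{m,j,k+1/2})² ] · min( c_{m,j,k}, c_{m,j+1,k}, c_{m,j,k+1} ). Then E_Δ is differentiable and d/dt E_Δ(t) ≤ −D_Δ(t) ≤ 0 for all t. -/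

import Mathlib

/-!
Differentiating the free energy and using the symmetry of `K` and `W`, one finds
`dE/dt = ∑ Δx_j Δy_k ψ_{m,j,k} dc_{m,j,k}/dt`: the potential `ψ` is the variational derivative
of `E`. Inserting the scheme and summing by parts in each direction (the no-flux conditions
remove the boundary terms) turns this into `-∑ Δx_j Δy_k (F^x u + F^y v)`. For an upwind flux
`F = u⁺ a - u⁻ b` one has `F u ≥ u² min(a, b) ≥ 0`, so this flux work dominates the dissipation.
-/

open Finset

theorem add_one_mem_Icc_of_mem_Icc_sub_one {a b j : ℤ} (hj : j ∈ Icc a (b - 1)) :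
    j + 1 ∈ Icc a b := by
  simp only [mem_Icc] at hj ⊢
  omega

theorem sum_Icc_by_parts_of_boundary_eq_zero {R : Type*} [CommRing R] (a b : ℤ) (g F : ℤ → R)
    (ha : F (a - 1) = 0) (hb : F b = 0) :
    ∑ j ∈ Icc a b, g j * (F j - F (j - 1)) = ∑ j ∈ Icc a (b - 1), F j * (g j - g (j + 1)) := by
  have hF : ∑ j ∈ Icc a b, g j * F j = ∑ j ∈ Icc a (b - 1), g j * F j :=
    (sum_subset (Icc_subset_Icc le_rfl (by omega)) fun j hj hj' => by
      rw [show j = b by simp only [mem_Icc] at hj hj'; omega, hb, mul_zero]).symm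
  have hshift : ∑ j ∈ Icc a b, g j * F (j - 1) = ∑ j ∈ Icc a (b - 1), g (j + 1) * F j := calc
    _ = ∑ j ∈ Icc (a - 1) (b - 1), g (j + 1) * F j :=
      sum_nbij' (· - 1) (· + 1) (fun j hj => by simp only [mem_Icc] at hj ⊢; omega)
        (fun j hj => by simp only [mem_Icc] at hj ⊢; omega)
        (fun _ _ => by simp) (fun _ _ => by simp) (fun _ _ => by simp)
    _ = _ := (sum_subset (Icc_subset_Icc (by omega) le_rfl) fun j hj hj' => by
      rw [show j = a - 1 by simp only [mem_Icc] at hj hj'; omega, ha, mul_zero]).symm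
  simp only [mul_sub, sum_sub_distrib, hF, hshift]
  simp only [mul_comm (F _)]

theorem sq_mul_min_le_upwind_mul {R : Type*} [CommRing R] [LinearOrder R]
    [IsStrictOrderedRing R] (u a b : R) : u ^ 2 * min a b ≤ (max u 0 * a - max (-u) 0 * b) * u := by
  rcases le_total 0 u with h | h
  · rw [max_eq_left h, max_eq_right (neg_nonpos.2 h)]
    nlinarith [min_le_left a b]
  · rw [max_eq_right h, max_eq_left (neg_nonneg.2 h)]
    nlinarith [min_le_right a b]

theorem sum_sum_le_sum_sum_of_subset_of_le {ι κ R : Type*} [AddCommMonoid R] [PartialOrder R]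
    [IsOrderedAddMonoid R] {s' s : Finset ι} {t' t : Finset κ} (hs : s' ⊆ s) (ht : t' ⊆ t)
    {f g : ι → κ → R} (hfg : ∀ i ∈ s', ∀ j ∈ t', f i j ≤ g i j)
    (hg : ∀ i ∈ s, ∀ j ∈ t, 0 ≤ g i j) :
    ∑ i ∈ s', ∑ j ∈ t', f i j ≤ ∑ i ∈ s, ∑ j ∈ t, g i j := by
  simp only [← sum_product']
  calc ∑ x ∈ s' ×ˢ t', f x.1 x.2 ≤ ∑ x ∈ s' ×ˢ t', g x.1 x.2 :=
        sum_le_sum fun x hx => hfg _ (mem_product.1 hx).1 _ (mem_product.1 hx).2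
    _ ≤ ∑ x ∈ s ×ˢ t, g x.1 x.2 :=
        sum_le_sum_of_subset_of_nonneg (product_subset_product hs ht) fun x hx _ =>
          hg _ (mem_product.1 hx).1 _ (mem_product.1 hx).2

theorem sum_sum_sum_sum_eq_sum_product_sum_product {α β M : Type*} [AddCommMonoid M]
    (s : Finset α) (t : Finset β) (f : α → α → β → β → M) :
    ∑ i ∈ s, ∑ j ∈ s, ∑ k ∈ t, ∑ l ∈ t, f i j k l
      = ∑ p ∈ s ×ˢ t, ∑ q ∈ s ×ˢ t, f q.1 p.1 p.2 q.2 := by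
  simp only [sum_product]
  rw [sum_comm]
  exact sum_congr rfl fun j _ => sum_comm

theorem hasDerivAt_half_sum_sum_mul_mul {ι : Type*} (s : Finset ι) (G : ι → ι → ℝ)
    (hG : ∀ p ∈ s, ∀ q ∈ s, G p q = G q p) (f : ι → ℝ → ℝ) (f' : ι → ℝ) (t : ℝ)
    (hf : ∀ p ∈ s, HasDerivAt (f p) (f' p) t) :
    HasDerivAt (fun t => 1 / 2 * ∑ p ∈ s, ∑ q ∈ s, G p q * f q t * f p t)
      (∑ p ∈ s, f' p * ∑ q ∈ s, G p q * f q t) t := by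
  have hsymm : ∑ p ∈ s, ∑ q ∈ s, G p q * f' q * f p t = ∑ p ∈ s, ∑ q ∈ s, G p q * f q t * f' p := by
    rw [sum_comm]
    exact sum_congr rfl fun p hp => sum_congr rfl fun q hq => by rw [hG q hq p hp]; ring
  have hsum : ∑ p ∈ s, ∑ q ∈ s, G p q * f q t * f' p = ∑ p ∈ s, f' p * ∑ q ∈ s, G p q * f q t := by
    simp only [mul_sum]
    exact sum_congr rfl fun p _ => sum_congr rfl fun q _ => by ring
  refine ((HasDerivAt.fun_sum fun p hp => HasDerivAt.fun_sum fun q hq =>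
    ((hf q hq).const_mul (G p q)).fun_mul (hf p hp)).const_mul (1 / 2 : ℝ)).congr_deriv ?_
  rw [sum_congr rfl fun p _ => sum_add_distrib, sum_add_distrib, hsymm, hsum]
  ring

theorem hasDerivAt_interaction_energy {σ ι : Type*} [Fintype σ] (s : Finset ι) (w : ι → ℝ)
    (z : σ → ℝ) (G H : ι → ι → ℝ) (hG : ∀ p ∈ s, ∀ q ∈ s, G p q = G q p)
    (hH : ∀ p ∈ s, ∀ q ∈ s, H p q = H q p) (c : σ → ι → ℝ → ℝ) (ρ θ : ι → ℝ → ℝ)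
    (hρ : ∀ p ∈ s, ∀ t, ρ p t = ∑ m, z m * c m p t) (hθ : ∀ p ∈ s, ∀ t, θ p t = ∑ m, c m p t)
    (c' : σ → ι → ℝ) (t : ℝ) (hc : ∀ m, ∀ p ∈ s, HasDerivAt (c m p) (c' m p) t) :
    HasDerivAt
      (fun t => 1 / 2 * ∑ p ∈ s, ∑ q ∈ s,
        w p * w q * (G p q * ρ q t * ρ p t + H p q * θ q t * θ p t))
      (∑ m, ∑ p ∈ s, w p * c' m p * ∑ q ∈ s, w q * (z m * G p q * ρ q t + H p q * θ q t)) t := by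
  have hρ' : ∀ p ∈ s, HasDerivAt (ρ p) (∑ m, z m * c' m p) t := fun p hp => by
    rw [funext (hρ p hp)]
    exact HasDerivAt.fun_sum fun m _ => (hc m p hp).const_mul _
  have hθ' : ∀ p ∈ s, HasDerivAt (θ p) (∑ m, c' m p) t := fun p hp => by
    rw [funext (hθ p hp)]
    exact HasDerivAt.fun_sum fun m _ => hc m p hp
  have hsymm : ∀ V : ι → ι → ℝ, (∀ p ∈ s, ∀ q ∈ s, V p q = V q p) →
      ∀ p ∈ s, ∀ q ∈ s, w p * w q * V p q = w q * w p * V q p := fun V hV p hp q hq => by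
    rw [hV p hp q hq, mul_comm (w p)]
  refine (((hasDerivAt_half_sum_sum_mul_mul s _ (hsymm G hG) ρ _ t hρ').fun_add
    (hasDerivAt_half_sum_sum_mul_mul s _ (hsymm H hH) θ _ t hθ')).congr_of_eventuallyEq
      (.of_forall fun t => ?_)).congr_deriv ?_
  · simp only [mul_add, sum_add_distrib, mul_assoc]
  · rw [sum_comm, ← sum_add_distrib]
    refine sum_congr rfl fun p _ => ?_
    simp only [sum_mul, mul_sum, ← sum_add_distrib]
    rw [sum_comm]
    exact sum_congr rfl fun _ _ => sum_congr rfl fun _ _ => by ring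

theorem hasDerivAt_free_energy {σ ι : Type*} [Fintype σ] (s : Finset ι) (w : ι → ℝ) (z : σ → ℝ)
    (G H : ι → ι → ℝ) (hG : ∀ p ∈ s, ∀ q ∈ s, G p q = G q p)
    (hH : ∀ p ∈ s, ∀ q ∈ s, H p q = H q p) (c : σ → ι → ℝ → ℝ) (ρ θ : ι → ℝ → ℝ)
    (hρ : ∀ p ∈ s, ∀ t, ρ p t = ∑ m, z m * c m p t) (hθ : ∀ p ∈ s, ∀ t, θ p t = ∑ m, c m p t)
    (c' ψ : σ → ι → ℝ) (t : ℝ) (hc : ∀ m, ∀ p ∈ s, HasDerivAt (c m p) (c' m p) t)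
    (hc0 : ∀ m, ∀ p ∈ s, c m p t ≠ 0)
    (hψ : ∀ m, ∀ p ∈ s, ψ m p = 1 + Real.log (c m p t)
      + ∑ q ∈ s, w q * (z m * G p q * ρ q t + H p q * θ q t)) :
    HasDerivAt (fun t => ∑ m, ∑ p ∈ s, w p * (c m p t * Real.log (c m p t))
        + 1 / 2 * ∑ p ∈ s, ∑ q ∈ s, w p * w q * (G p q * ρ q t * ρ p t + H p q * θ q t * θ p t))
      (∑ m, ∑ p ∈ s, w p * (ψ m p * c' m p)) t := by
  have hentropy : HasDerivAt (fun t => ∑ m, ∑ p ∈ s, w p * (c m p t * Real.log (c m p t)))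
      (∑ m, ∑ p ∈ s, w p * ((Real.log (c m p t) + 1) * c' m p)) t :=
    HasDerivAt.fun_sum fun m _ => HasDerivAt.fun_sum fun p hp =>
      ((Real.hasDerivAt_mul_log (hc0 m p hp)).comp t (hc m p hp)).const_mul (w p)
  refine (hentropy.fun_add
    (hasDerivAt_interaction_energy s w z G H hG hH c ρ θ hρ hθ c' t hc)).congr_deriv ?_
  simp only [← sum_add_distrib]
  exact sum_congr rfl fun m _ => sum_congr rfl fun p hp => by rw [hψ m p hp]; ring

theorem hasDerivAt_free_energy_2d {σ : Type*} [Fintype σ] (S : Finset ℤ) (Δx Δy : ℤ → ℝ)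
    (z : σ → ℤ) (K W : ℤ → ℤ → ℝ) (hK : ∀ n l, K n l = K (-n) (-l))
    (hW : ∀ n l, W n l = W (-n) (-l)) (c : σ → ℤ → ℤ → ℝ → ℝ) (ρ θ : ℤ → ℤ → ℝ → ℝ)
    (hρ : ∀ j k t, ρ j k t = ∑ m, (z m : ℝ) * c m j k t) (hθ : ∀ j k t, θ j k t = ∑ m, c m j k t)
    (ψ : σ → ℤ → ℤ → ℝ) (t : ℝ)
    (hψ : ∀ m, ∀ j ∈ S, ∀ k ∈ S, ψ m j k = 1 + Real.log (c m j k t)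
      + ∑ i ∈ S, ∑ l ∈ S, Δx i * Δy l * ((z m : ℝ) * K (j - i) (k - l) * ρ i l t
        + W (j - i) (k - l) * θ i l t))
    (hc : ∀ m, ∀ j ∈ S, ∀ k ∈ S, DifferentiableAt ℝ (c m j k) t)
    (hc0 : ∀ m, ∀ j ∈ S, ∀ k ∈ S, c m j k t ≠ 0) :
    HasDerivAt (fun t => (∑ m, ∑ j ∈ S, ∑ k ∈ S, Δx j * Δy k * (c m j k t * Real.log (c m j k t)))
      + 1 / 2 * ∑ i ∈ S, ∑ j ∈ S, ∑ k ∈ S, ∑ l ∈ S, Δx j * Δx i * Δy k * Δy l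
        * (K (j - i) (k - l) * ρ i l t * ρ j k t + W (j - i) (k - l) * θ i l t * θ j k t))
      (∑ m, ∑ j ∈ S, ∑ k ∈ S, Δx j * Δy k * (ψ m j k * deriv (c m j k) t)) t := by
  have hsymm : ∀ V : ℤ → ℤ → ℝ, (∀ n l, V n l = V (-n) (-l)) → ∀ p q : ℤ × ℤ,
      V (p.1 - q.1) (p.2 - q.2) = V (q.1 - p.1) (q.2 - p.2) := fun V hV p q => by
    rw [hV, neg_sub, neg_sub]
  have h := hasDerivAt_free_energy (S ×ˢ S) (fun p => Δx p.1 * Δy p.2) (fun m => (z m : ℝ))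
    (fun p q => K (p.1 - q.1) (p.2 - q.2)) (fun p q => W (p.1 - q.1) (p.2 - q.2))
    (fun p _ q _ => hsymm K hK p q) (fun p _ q _ => hsymm W hW p q)
    (fun m p => c m p.1 p.2) (fun p => ρ p.1 p.2) (fun p => θ p.1 p.2)
    (fun p _ => hρ p.1 p.2) (fun p _ => hθ p.1 p.2) (fun m p => deriv (c m p.1 p.2) t)
    (fun m p => ψ m p.1 p.2) t
    (fun m p hp => (hc m p.1 (mem_product.1 hp).1 p.2 (mem_product.1 hp).2).hasDerivAt)
    (fun m p hp => hc0 m p.1 (mem_product.1 hp).1 p.2 (mem_product.1 hp).2)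
    (fun m p hp => by rw [hψ m p.1 (mem_product.1 hp).1 p.2 (mem_product.1 hp).2, sum_product])
  refine (h.congr_of_eventuallyEq (.of_forall fun t => ?_)).congr_deriv ?_
  · rw [sum_sum_sum_sum_eq_sum_product_sum_product]
    simp only [sum_product]
    congr 2
    exact sum_congr rfl fun _ _ => sum_congr rfl fun _ _ => sum_congr rfl fun _ _ =>
      sum_congr rfl fun _ _ => by ring
  · simp only [sum_product]

theorem sum_potential_mul_rate_eq_neg_flux_work {a b : ℤ} {Δx Δy : ℤ → ℝ}
    (hΔx : ∀ j ∈ Icc a b, Δx j ≠ 0) (hΔy : ∀ k ∈ Icc a b, Δy k ≠ 0) {ψ u v Fx Fy r : ℤ → ℤ → ℝ}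
    (hu : ∀ j ∈ Icc a (b - 1), ∀ k ∈ Icc a b, u j k = -(ψ (j + 1) k - ψ j k) / Δx j)
    (hv : ∀ j ∈ Icc a b, ∀ k ∈ Icc a (b - 1), v j k = -(ψ j (k + 1) - ψ j k) / Δy k)
    (hFxl : ∀ k, Fx (a - 1) k = 0) (hFxr : ∀ k, Fx b k = 0)
    (hFyl : ∀ j, Fy j (a - 1) = 0) (hFyr : ∀ j, Fy j b = 0)
    (hr : ∀ j ∈ Icc a b, ∀ k ∈ Icc a b,
      r j k = -(Fx j k - Fx (j - 1) k) / Δx j - (Fy j k - Fy j (k - 1)) / Δy k) :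
    ∑ j ∈ Icc a b, ∑ k ∈ Icc a b, Δx j * Δy k * (ψ j k * r j k)
      = -((∑ j ∈ Icc a (b - 1), ∑ k ∈ Icc a b, Δx j * Δy k * (Fx j k * u j k))
          + ∑ j ∈ Icc a b, ∑ k ∈ Icc a (b - 1), Δx j * Δy k * (Fy j k * v j k)) := by
  have hsub : Icc a (b - 1) ⊆ Icc a b := Icc_subset_Icc_right (by omega)
  have hx : ∑ j ∈ Icc a b, ∑ k ∈ Icc a b, Δy k * (ψ j k * (Fx j k - Fx (j - 1) k))
      = ∑ j ∈ Icc a (b - 1), ∑ k ∈ Icc a b, Δx j * Δy k * (Fx j k * u j k) := by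
    rw [sum_comm, sum_comm (s := Icc a (b - 1))]
    refine sum_congr rfl fun k hk => ?_
    rw [← mul_sum, sum_Icc_by_parts_of_boundary_eq_zero a b (ψ · k) (Fx · k) (hFxl k) (hFxr k),
      mul_sum]
    refine sum_congr rfl fun j hj => ?_
    rw [hu j hj k hk]
    field_simp [hΔx j (hsub hj)]
    ring
  have hy : ∑ j ∈ Icc a b, ∑ k ∈ Icc a b, Δx j * (ψ j k * (Fy j k - Fy j (k - 1)))
      = ∑ j ∈ Icc a b, ∑ k ∈ Icc a (b - 1), Δx j * Δy k * (Fy j k * v j k) := by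
    refine sum_congr rfl fun j hj => ?_
    rw [← mul_sum, sum_Icc_by_parts_of_boundary_eq_zero a b (ψ j) (Fy j) (hFyl j) (hFyr j),
      mul_sum]
    refine sum_congr rfl fun k hk => ?_
    rw [hv j hj k hk]
    field_simp [hΔy k (hsub hk)]
    ring
  calc ∑ j ∈ Icc a b, ∑ k ∈ Icc a b, Δx j * Δy k * (ψ j k * r j k)
      = ∑ j ∈ Icc a b, ∑ k ∈ Icc a b, -(Δy k * (ψ j k * (Fx j k - Fx (j - 1) k))
          + Δx j * (ψ j k * (Fy j k - Fy j (k - 1)))) :=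
        sum_congr rfl fun j hj => sum_congr rfl fun k hk => by
          rw [hr j hj k hk]
          field_simp [hΔx j hj, hΔy k hk]
          ring
    _ = _ := by simp only [sum_neg_distrib, sum_add_distrib, hx, hy]

theorem sum_sum_mul_sq_mul_le_sum_sum_mul_upwind_mul {s' s t' t : Finset ℤ} (hs : s' ⊆ s)
    (ht : t' ⊆ t) (w u a b μ F : ℤ → ℤ → ℝ) (hw : ∀ j ∈ s, ∀ k ∈ t, 0 ≤ w j k)
    (ha : ∀ j ∈ s, ∀ k ∈ t, 0 ≤ a j k) (hb : ∀ j ∈ s, ∀ k ∈ t, 0 ≤ b j k)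
    (hμ : ∀ j ∈ s', ∀ k ∈ t', μ j k ≤ min (a j k) (b j k))
    (hF : ∀ j ∈ s, ∀ k ∈ t, F j k = max (u j k) 0 * a j k - max (-(u j k)) 0 * b j k) :
    ∑ j ∈ s', ∑ k ∈ t', w j k * (u j k ^ 2 * μ j k)
      ≤ ∑ j ∈ s, ∑ k ∈ t, w j k * (F j k * u j k) := by
  have hupwind : ∀ j ∈ s, ∀ k ∈ t, 0 ≤ w j k * (u j k ^ 2 * min (a j k) (b j k))
      ∧ w j k * (u j k ^ 2 * min (a j k) (b j k)) ≤ w j k * (F j k * u j k) := fun j hj k hk => by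
    have := hw j hj k hk; have := ha j hj k hk; have := hb j hj k hk
    rw [hF j hj k hk]
    exact ⟨by positivity,
      mul_le_mul_of_nonneg_left (sq_mul_min_le_upwind_mul _ _ _) (by positivity)⟩
  refine sum_sum_le_sum_sum_of_subset_of_le hs ht (fun j hj k hk => ?_)
    fun j hj k hk => (hupwind j hj k hk).1.trans (hupwind j hj k hk).2
  refine le_trans ?_ (hupwind j (hs hj) k (ht hk)).2
  have := hw j (hs hj) k (ht hk)
  gcongr
  exact hμ j hj k hk

theorem dissipation_le_flux_work {a b : ℤ} {Δx Δy : ℤ → ℝ}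
    (hΔx : ∀ j ∈ Icc a b, 0 ≤ Δx j) (hΔy : ∀ k ∈ Icc a b, 0 ≤ Δy k) {c u v Fx Fy : ℤ → ℤ → ℝ}
    (hc : ∀ j ∈ Icc a b, ∀ k ∈ Icc a b, 0 ≤ c j k)
    (hFx : ∀ j ∈ Icc a (b - 1), ∀ k ∈ Icc a b,
      Fx j k = max (u j k) 0 * c j k - max (-(u j k)) 0 * c (j + 1) k)
    (hFy : ∀ j ∈ Icc a b, ∀ k ∈ Icc a (b - 1),
      Fy j k = max (v j k) 0 * c j k - max (-(v j k)) 0 * c j (k + 1)) :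
    ∑ j ∈ Icc a (b - 1), ∑ k ∈ Icc a (b - 1),
        Δx j * Δy k * (u j k ^ 2 + v j k ^ 2) * min (c j k) (min (c (j + 1) k) (c j (k + 1)))
      ≤ (∑ j ∈ Icc a (b - 1), ∑ k ∈ Icc a b, Δx j * Δy k * (Fx j k * u j k))
          + ∑ j ∈ Icc a b, ∑ k ∈ Icc a (b - 1), Δx j * Δy k * (Fy j k * v j k) := by
  have hsub : Icc a (b - 1) ⊆ Icc a b := Icc_subset_Icc_right (by omega)
  have hx := sum_sum_mul_sq_mul_le_sum_sum_mul_upwind_mul subset_rfl hsub (fun j k => Δx j * Δy k)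
    u (fun j k => c j k) (fun j k => c (j + 1) k)
    (fun j k => min (c j k) (min (c (j + 1) k) (c j (k + 1)))) Fx
    (fun j hj k hk => mul_nonneg (hΔx j (hsub hj)) (hΔy k hk))
    (fun j hj k hk => hc j (hsub hj) k hk) (fun j hj k hk => hc (j + 1) (add_one_mem_Icc_of_mem_Icc_sub_one hj) k hk)
    (fun j _ k _ => min_le_min_left _ (min_le_left _ _)) hFx
  have hy := sum_sum_mul_sq_mul_le_sum_sum_mul_upwind_mul hsub subset_rfl (fun j k => Δx j * Δy k)
    v (fun j k => c j k) (fun j k => c j (k + 1))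
    (fun j k => min (c j k) (min (c (j + 1) k) (c j (k + 1)))) Fy
    (fun j hj k hk => mul_nonneg (hΔx j hj) (hΔy k (hsub hk)))
    (fun j hj k hk => hc j hj k (hsub hk)) (fun j hj k hk => hc j hj (k + 1) (add_one_mem_Icc_of_mem_Icc_sub_one hk))
    (fun j _ k _ => min_le_min_left _ (min_le_right _ _)) hFy
  refine le_of_eq_of_le ?_ (add_le_add hx hy)
  simp only [← sum_add_distrib]
  exact sum_congr rfl fun j _ => sum_congr rfl fun k _ => by ring

theorem dissipation_nonneg {a b : ℤ} {Δx Δy : ℤ → ℝ} (hΔx : ∀ j ∈ Icc a b, 0 ≤ Δx j)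
    (hΔy : ∀ k ∈ Icc a b, 0 ≤ Δy k) {c : ℤ → ℤ → ℝ} (u v : ℤ → ℤ → ℝ)
    (hc : ∀ j ∈ Icc a b, ∀ k ∈ Icc a b, 0 ≤ c j k) :
    0 ≤ ∑ j ∈ Icc a (b - 1), ∑ k ∈ Icc a (b - 1),
        Δx j * Δy k * (u j k ^ 2 + v j k ^ 2) * min (c j k) (min (c (j + 1) k) (c j (k + 1))) := by
  have hsub : Icc a (b - 1) ⊆ Icc a b := Icc_subset_Icc_right (by omega)
  refine sum_nonneg fun j hj => sum_nonneg fun k hk => ?_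
  have := hΔx j (hsub hj); have := hΔy k (hsub hk); have := hc j (hsub hj) k (hsub hk)
  have := hc (j + 1) (add_one_mem_Icc_of_mem_Icc_sub_one hj) k (hsub hk)
  have := hc j (hsub hj) (k + 1) (add_one_mem_Icc_of_mem_Icc_sub_one hk)
  positivity

/-- `u m j k t` and `Fx m j k t` live on the edge `(j + 1/2, k)`, `v m j k t` and `Fy m j k t` on
the edge `(j, k + 1/2)`. -/
theorem discrete_free_energy_dissipation_2d_general
    (M N : ℕ)
    (Δx Δy : ℤ → ℝ)
    (hΔx : ∀ j ∈ Finset.Icc (-(N : ℤ)) (N : ℤ), 0 < Δx j)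
    (hΔy : ∀ k ∈ Finset.Icc (-(N : ℤ)) (N : ℤ), 0 < Δy k)
    (z : Fin M → ℤ) (K W : ℤ → ℤ → ℝ)
    (hKsymm : ∀ n l, K n l = K (-n) (-l)) (hWsymm : ∀ n l, W n l = W (-n) (-l))
    (c : Fin M → ℤ → ℤ → ℝ → ℝ)
    (hcpos : ∀ m, ∀ j ∈ Finset.Icc (-(N : ℤ)) (N : ℤ),
      ∀ k ∈ Finset.Icc (-(N : ℤ)) (N : ℤ), ∀ t, 0 < c m j k t)
    (hcdiff : ∀ m, ∀ j ∈ Finset.Icc (-(N : ℤ)) (N : ℤ),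
      ∀ k ∈ Finset.Icc (-(N : ℤ)) (N : ℤ), Differentiable ℝ (c m j k))
    (ρ θ : ℤ → ℤ → ℝ → ℝ)
    (hρ : ∀ j k t, ρ j k t = ∑ m, (z m : ℝ) * c m j k t)
    (hθ : ∀ j k t, θ j k t = ∑ m, c m j k t)
    (ψ : Fin M → ℤ → ℤ → ℝ → ℝ)
    (hψ : ∀ m, ∀ j ∈ Finset.Icc (-(N : ℤ)) (N : ℤ),
      ∀ k ∈ Finset.Icc (-(N : ℤ)) (N : ℤ), ∀ t,
      ψ m j k t = 1 + Real.log (c m j k t)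
        + ∑ i ∈ Finset.Icc (-(N : ℤ)) (N : ℤ), ∑ l ∈ Finset.Icc (-(N : ℤ)) (N : ℤ),
            Δx i * Δy l * ((z m : ℝ) * K (j - i) (k - l) * ρ i l t
              + W (j - i) (k - l) * θ i l t))
    (u v : Fin M → ℤ → ℤ → ℝ → ℝ)
    (hu : ∀ m, ∀ j ∈ Finset.Icc (-(N : ℤ)) ((N : ℤ) - 1),
      ∀ k ∈ Finset.Icc (-(N : ℤ)) (N : ℤ), ∀ t,
      u m j k t = -(ψ m (j + 1) k t - ψ m j k t) / Δx j)
    (hv : ∀ m, ∀ j ∈ Finset.Icc (-(N : ℤ)) (N : ℤ),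
      ∀ k ∈ Finset.Icc (-(N : ℤ)) ((N : ℤ) - 1), ∀ t,
      v m j k t = -(ψ m j (k + 1) t - ψ m j k t) / Δy k)
    (Fx Fy : Fin M → ℤ → ℤ → ℝ → ℝ)
    (hFx : ∀ m, ∀ j ∈ Finset.Icc (-(N : ℤ)) ((N : ℤ) - 1),
      ∀ k ∈ Finset.Icc (-(N : ℤ)) (N : ℤ), ∀ t,
      Fx m j k t = max (u m j k t) 0 * c m j k t - max (-(u m j k t)) 0 * c m (j + 1) k t)
    (hFy : ∀ m, ∀ j ∈ Finset.Icc (-(N : ℤ)) (N : ℤ),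
      ∀ k ∈ Finset.Icc (-(N : ℤ)) ((N : ℤ) - 1), ∀ t,
      Fy m j k t = max (v m j k t) 0 * c m j k t - max (-(v m j k t)) 0 * c m j (k + 1) t)
    (hFxl : ∀ m k t, Fx m (-(N : ℤ) - 1) k t = 0)
    (hFxr : ∀ m k t, Fx m (N : ℤ) k t = 0)
    (hFyl : ∀ m j t, Fy m j (-(N : ℤ) - 1) t = 0)
    (hFyr : ∀ m j t, Fy m j (N : ℤ) t = 0)
    (hscheme : ∀ m, ∀ j ∈ Finset.Icc (-(N : ℤ)) (N : ℤ),
      ∀ k ∈ Finset.Icc (-(N : ℤ)) (N : ℤ), ∀ t,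
      deriv (c m j k) t = -(Fx m j k t - Fx m (j - 1) k t) / Δx j
        - (Fy m j k t - Fy m j (k - 1) t) / Δy k)
    (E D : ℝ → ℝ)
    (hE : ∀ t, E t =
      (∑ m, ∑ j ∈ Finset.Icc (-(N : ℤ)) (N : ℤ), ∑ k ∈ Finset.Icc (-(N : ℤ)) (N : ℤ),
        Δx j * Δy k * (c m j k t * Real.log (c m j k t)))
      + (1 / 2) * ∑ i ∈ Finset.Icc (-(N : ℤ)) (N : ℤ), ∑ j ∈ Finset.Icc (-(N : ℤ)) (N : ℤ),
          ∑ k ∈ Finset.Icc (-(N : ℤ)) (N : ℤ), ∑ l ∈ Finset.Icc (-(N : ℤ)) (N : ℤ),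
          Δx j * Δx i * Δy k * Δy l * (K (j - i) (k - l) * ρ i l t * ρ j k t
            + W (j - i) (k - l) * θ i l t * θ j k t))
    (hD : ∀ t, D t = ∑ m, ∑ j ∈ Finset.Icc (-(N : ℤ)) ((N : ℤ) - 1),
      ∑ k ∈ Finset.Icc (-(N : ℤ)) ((N : ℤ) - 1),
      Δx j * Δy k * ((u m j k t) ^ 2 + (v m j k t) ^ 2)
        * min (c m j k t) (min (c m (j + 1) k t) (c m j (k + 1) t))) :
    Differentiable ℝ E ∧ ∀ t, deriv E t ≤ -D t ∧ -D t ≤ 0 := by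
  set S := Finset.Icc (-(N : ℤ)) (N : ℤ)
  obtain rfl : E = _ := funext hE
  have hE' : ∀ t, HasDerivAt _
      (∑ m, ∑ j ∈ S, ∑ k ∈ S, Δx j * Δy k * (ψ m j k t * deriv (c m j k) t)) t := fun t =>
    hasDerivAt_free_energy_2d S Δx Δy z K W hKsymm hWsymm c ρ θ hρ hθ (fun m j k => ψ m j k t) t
      (fun m j hj k hk => hψ m j hj k hk t)
      (fun m j hj k hk => (hcdiff m j hj k hk).differentiableAt)
      (fun m j hj k hk => (hcpos m j hj k hk t).ne')
  refine ⟨fun t => (hE' t).differentiableAt, fun t => ?_⟩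
  rw [(hE' t).deriv, hD t, ← sum_neg_distrib]
  refine ⟨sum_le_sum fun m _ => ?_, sum_nonpos fun m _ => neg_nonpos.2 ?_⟩
  · refine (sum_potential_mul_rate_eq_neg_flux_work (fun j hj => (hΔx j hj).ne')
      (fun k hk => (hΔy k hk).ne') (fun j hj k hk => hu m j hj k hk t)
      (fun j hj k hk => hv m j hj k hk t) (hFxl m · t) (hFxr m · t) (hFyl m · t) (hFyr m · t)
      (fun j hj k hk => hscheme m j hj k hk t)).trans_le (neg_le_neg ?_)
    exact dissipation_le_flux_work (fun j hj => (hΔx j hj).le) (fun k hk => (hΔy k hk).le)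
      (fun j hj k hk => (hcpos m j hj k hk t).le) (fun j hj k hk => hFx m j hj k hk t)
      (fun j hj k hk => hFy m j hj k hk t)
  · exact dissipation_nonneg (fun j hj => (hΔx j hj).le) (fun k hk => (hΔy k hk).le) _ _
      (fun j hj k hk => (hcpos m j hj k hk t).le)

/-- Discrete free energy–dissipation estimate (Theorem 3.4) for the two-dimensional
semi-discrete upwind finite volume scheme with no-flux boundary conditions.
Here `Fx m j k t` denotes `F^x_{m,j+1/2,k}(t)`, `Fy m j k t` denotes
`F^y_{m,j,k+1/2}(t)`, `u m j k t` denotes `u_{m,j+1/2,k}(t)` and `v m j k t`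
denotes `v_{m,j,k+1/2}(t)`. -/
theorem discrete_free_energy_dissipation_2d
    (M N : ℕ) (hM : 1 ≤ M) (hN : 1 ≤ N)
    (Δx Δy : ℤ → ℝ)
    (hΔx : ∀ j ∈ Finset.Icc (-(N : ℤ)) (N : ℤ), 0 < Δx j)
    (hΔy : ∀ k ∈ Finset.Icc (-(N : ℤ)) (N : ℤ), 0 < Δy k)
    (z : Fin M → ℤ) (K W : ℤ → ℤ → ℝ)
    (hKsymm : ∀ n l, K n l = K (-n) (-l)) (hWsymm : ∀ n l, W n l = W (-n) (-l))
    (c : Fin M → ℤ → ℤ → ℝ → ℝ)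
    (hcpos : ∀ m, ∀ j ∈ Finset.Icc (-(N : ℤ)) (N : ℤ),
      ∀ k ∈ Finset.Icc (-(N : ℤ)) (N : ℤ), ∀ t, 0 < c m j k t)
    (hcdiff : ∀ m, ∀ j ∈ Finset.Icc (-(N : ℤ)) (N : ℤ),
      ∀ k ∈ Finset.Icc (-(N : ℤ)) (N : ℤ), Differentiable ℝ (c m j k))
    (ρ θ : ℤ → ℤ → ℝ → ℝ)
    (hρ : ∀ j k t, ρ j k t = ∑ m, (z m : ℝ) * c m j k t)
    (hθ : ∀ j k t, θ j k t = ∑ m, c m j k t)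
    (ψ : Fin M → ℤ → ℤ → ℝ → ℝ)
    (hψ : ∀ m, ∀ j ∈ Finset.Icc (-(N : ℤ)) (N : ℤ),
      ∀ k ∈ Finset.Icc (-(N : ℤ)) (N : ℤ), ∀ t,
      ψ m j k t = 1 + Real.log (c m j k t)
        + ∑ i ∈ Finset.Icc (-(N : ℤ)) (N : ℤ), ∑ l ∈ Finset.Icc (-(N : ℤ)) (N : ℤ),
            Δx i * Δy l * ((z m : ℝ) * K (j - i) (k - l) * ρ i l t
              + W (j - i) (k - l) * θ i l t))
    (u v : Fin M → ℤ → ℤ → ℝ → ℝ)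
    (hu : ∀ m, ∀ j ∈ Finset.Icc (-(N : ℤ)) ((N : ℤ) - 1),
      ∀ k ∈ Finset.Icc (-(N : ℤ)) (N : ℤ), ∀ t,
      u m j k t = -(ψ m (j + 1) k t - ψ m j k t) / Δx j)
    (hv : ∀ m, ∀ j ∈ Finset.Icc (-(N : ℤ)) (N : ℤ),
      ∀ k ∈ Finset.Icc (-(N : ℤ)) ((N : ℤ) - 1), ∀ t,
      v m j k t = -(ψ m j (k + 1) t - ψ m j k t) / Δy k)
    (Fx Fy : Fin M → ℤ → ℤ → ℝ → ℝ)
    (hFx : ∀ m, ∀ j ∈ Finset.Icc (-(N : ℤ)) ((N : ℤ) - 1),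
      ∀ k ∈ Finset.Icc (-(N : ℤ)) (N : ℤ), ∀ t,
      Fx m j k t = max (u m j k t) 0 * c m j k t - max (-(u m j k t)) 0 * c m (j + 1) k t)
    (hFy : ∀ m, ∀ j ∈ Finset.Icc (-(N : ℤ)) (N : ℤ),
      ∀ k ∈ Finset.Icc (-(N : ℤ)) ((N : ℤ) - 1), ∀ t,
      Fy m j k t = max (v m j k t) 0 * c m j k t - max (-(v m j k t)) 0 * c m j (k + 1) t)
    (hFxl : ∀ m k t, Fx m (-(N : ℤ) - 1) k t = 0)
    (hFxr : ∀ m k t, Fx m (N : ℤ) k t = 0)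
    (hFyl : ∀ m j t, Fy m j (-(N : ℤ) - 1) t = 0)
    (hFyr : ∀ m j t, Fy m j (N : ℤ) t = 0)
    (hscheme : ∀ m, ∀ j ∈ Finset.Icc (-(N : ℤ)) (N : ℤ),
      ∀ k ∈ Finset.Icc (-(N : ℤ)) (N : ℤ), ∀ t,
      deriv (c m j k) t = -(Fx m j k t - Fx m (j - 1) k t) / Δx j
        - (Fy m j k t - Fy m j (k - 1) t) / Δy k)
    (E D : ℝ → ℝ)
    (hE : ∀ t, E t =
      (∑ m, ∑ j ∈ Finset.Icc (-(N : ℤ)) (N : ℤ), ∑ k ∈ Finset.Icc (-(N : ℤ)) (N : ℤ),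
        Δx j * Δy k * (c m j k t * Real.log (c m j k t)))
      + (1 / 2) * ∑ i ∈ Finset.Icc (-(N : ℤ)) (N : ℤ), ∑ j ∈ Finset.Icc (-(N : ℤ)) (N : ℤ),
          ∑ k ∈ Finset.Icc (-(N : ℤ)) (N : ℤ), ∑ l ∈ Finset.Icc (-(N : ℤ)) (N : ℤ),
          Δx j * Δx i * Δy k * Δy l * (K (j - i) (k - l) * ρ i l t * ρ j k t
            + W (j - i) (k - l) * θ i l t * θ j k t))
    (hD : ∀ t, D t = ∑ m, ∑ j ∈ Finset.Icc (-(N : ℤ)) ((N : ℤ) - 1),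
      ∑ k ∈ Finset.Icc (-(N : ℤ)) ((N : ℤ) - 1),
      Δx j * Δy k * ((u m j k t) ^ 2 + (v m j k t) ^ 2)
        * min (c m j k t) (min (c m (j + 1) k t) (c m j (k + 1) t))) :
    Differentiable ℝ E ∧ ∀ t, deriv E t ≤ -D t ∧ -D t ≤ 0 :=
  discrete_free_energy_dissipation_2d_general M N Δx Δy hΔx hΔy z K W hKsymm hWsymm c hcpos hcdiff ρ
    θ hρ hθ ψ hψ u v hu hv Fx Fy hFx hFy hFxl hFxr hFyl hFyr hscheme E D hE hD
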